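/- arXiv:math/0610910 — 4 statements merged into one kernel-verified Lean document; each statement's English description precedes it below -/
import Mathlib

section
/- (Claim 1, Case m ≥ 4) Let m ≥ 4, k ≥ 3, and suppose an edge-colored K_{m,n} (m ≥ n ≥ k) contains a rainbow spanning subgraph G whose nontrivial component consists of a complete bipartite K_{m,k-2} together with two pendant edges attached at a common vertex of the part of size m, the remaining vertices being isolated. Then K_{m,n} contains a rainbow matching of size k. -/
/-- A set of edges of a bipartite graph with parts `Fin m` and `Fin n`
forms a matching if its edges are pairwise vertex-disjoint. -/
def IsMatchingIn {m n : ℕ} (M : Finset (Fin m × Fin n)) : Prop :=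
  ∀ e ∈ M, ∀ f ∈ M, e ≠ f → e.1 ≠ f.1 ∧ e.2 ≠ f.2

/-- The bipartite graph with edge set `E` contains a matching of size `k` (a copy of `kK₂`). -/
def HasMatching {m n : ℕ} (E : Finset (Fin m × Fin n)) (k : ℕ) : Prop :=
  ∃ M ⊆ E, M.card = k ∧ IsMatchingIn M

/-- The edge-colored complete bipartite graph `K_{m,n}` with coloring `c`
contains a rainbow matching of size `k` (a rainbow copy of `kK₂`). -/
def HasRainbowMatching {m n : ℕ} {γ : Type*} (c : Fin m × Fin n → γ) (k : ℕ) : Prop :=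
  ∃ M : Finset (Fin m × Fin n), M.card = k ∧ IsMatchingIn M ∧ Set.InjOn c ↑M

/-- An injection from a finset `B` into a finset `T` of at least the same size. -/
lemma aux_inj0 {n m : ℕ} (hm : 0 < m) (B : Finset (Fin n)) (T : Finset (Fin m))
    (h : B.card ≤ T.card) :
    ∃ f : Fin n → Fin m, Set.InjOn f ↑B ∧ ∀ y ∈ B, f y ∈ T := by
  obtain ⟨T', hsub, hcard⟩ := Finset.exists_subset_card_eq h
  have e := Finset.equivOfCardEq hcard.symm
  refine ⟨fun y => if hy : y ∈ B then (e ⟨y, hy⟩ : Fin m) else ⟨0, hm⟩, ?_, ?_⟩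
  · intro y hy z hz heq
    rw [Finset.mem_coe] at hy hz
    dsimp only at heq
    rw [dif_pos hy, dif_pos hz] at heq
    have := e.injective (Subtype.coe_injective heq)
    exact congrArg Subtype.val this
  · intro y hy
    simp only [dif_pos hy]
    exact hsub (e ⟨y, hy⟩).2

/-- An injection from `B` into `T` additionally avoiding sending `q` to `p`. -/
lemma aux_inj1 {n m : ℕ} (hm : 0 < m) (B : Finset (Fin n)) (T : Finset (Fin m))
    (h : B.card ≤ T.card) (hT2 : 2 ≤ T.card) (p : Fin m) (q : Fin n) :
    ∃ f : Fin n → Fin m, Set.InjOn f ↑B ∧ (∀ y ∈ B, f y ∈ T) ∧ (q ∈ B → f q ≠ p) := by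
  by_cases hq : q ∈ B
  · by_cases hp : p ∈ T
    · have h1 : 0 < (T.erase p).card := by
        rw [Finset.card_erase_of_mem hp]; omega
      obtain ⟨t0, ht0⟩ := Finset.card_pos.mp h1
      have ht0T : t0 ∈ T := Finset.mem_of_mem_erase ht0
      have ht0p : t0 ≠ p := Finset.ne_of_mem_erase ht0
      obtain ⟨g, hg1, hg2⟩ := aux_inj0 hm (B.erase q) (T.erase t0) (by
        rw [Finset.card_erase_of_mem hq, Finset.card_erase_of_mem ht0T]; omega)
      refine ⟨fun y => if y = q then t0 else g y, ?_, ?_, ?_⟩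
      · intro y hy z hz heq
        rw [Finset.mem_coe] at hy hz
        dsimp only at heq
        by_cases hyq : y = q <;> by_cases hzq : z = q
        · rw [hyq, hzq]
        · rw [if_pos hyq, if_neg hzq] at heq
          exact absurd heq.symm
            (Finset.ne_of_mem_erase (hg2 z (Finset.mem_erase.mpr ⟨hzq, hz⟩)))
        · rw [if_neg hyq, if_pos hzq] at heq
          exact absurd heq
            (Finset.ne_of_mem_erase (hg2 y (Finset.mem_erase.mpr ⟨hyq, hy⟩)))
        · rw [if_neg hyq, if_neg hzq] at heq
          exact hg1 (Finset.mem_coe.mpr (Finset.mem_erase.mpr ⟨hyq, hy⟩))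
            (Finset.mem_coe.mpr (Finset.mem_erase.mpr ⟨hzq, hz⟩)) heq
      · intro y hy
        dsimp only
        by_cases hyq : y = q
        · rw [if_pos hyq]; exact ht0T
        · rw [if_neg hyq]
          exact Finset.mem_of_mem_erase (hg2 y (Finset.mem_erase.mpr ⟨hyq, hy⟩))
      · intro _
        dsimp only
        rw [if_pos rfl]; exact ht0p
    · obtain ⟨f, h1, h2⟩ := aux_inj0 hm B T h
      exact ⟨f, h1, h2, fun hqB heq => hp (heq ▸ h2 q hqB)⟩
  · obtain ⟨f, h1, h2⟩ := aux_inj0 hm B T h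
    exact ⟨f, h1, h2, fun hqB => absurd hqB hq⟩

/-- Building a rainbow `k`-matching from the `K_{m,k-2}` together with two suitable
edges `(x1,b1)`, `(x2,b2)`, whose colors may collide with the complete bipartite part
only at a single excluded edge `(p,q)` (for the `b2`-edge). -/
lemma build_matching {m n k : ℕ} (hm : 4 ≤ m) (hk : 3 ≤ k) (hkn : k ≤ n) (hnm : n ≤ m)
    (c : Fin m × Fin n → ℕ) (B' : Finset (Fin n)) (hB' : B'.card = k - 2)
    (b1 b2 : Fin n) (hb1 : b1 ∉ B') (hb2 : b2 ∉ B') (hb12 : b1 ≠ b2)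
    (x1 x2 : Fin m) (hx : x1 ≠ x2) (p : Fin m) (q : Fin n)
    (hinj : Set.InjOn c ((Finset.univ ×ˢ B' : Finset (Fin m × Fin n)) : Set (Fin m × Fin n)))
    (h2 : c (x1, b1) ≠ c (x2, b2))
    (h3 : ∀ a : Fin m, ∀ b ∈ B', c (x1, b1) ≠ c (a, b))
    (h4 : ∀ a : Fin m, ∀ b ∈ B', (a, b) ≠ (p, q) → c (x2, b2) ≠ c (a, b)) :
    HasRainbowMatching c k := by
  classical
  set T : Finset (Fin m) := Finset.univ \ {x1, x2} with hT
  have hTcard : T.card = m - 2 := by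
    rw [hT, Finset.card_sdiff_of_subset (Finset.subset_univ _), Finset.card_univ, Fintype.card_fin,
      Finset.card_insert_of_notMem (by simpa using hx), Finset.card_singleton]
  obtain ⟨f, hf1, hf2, hf3⟩ := aux_inj1 (by omega) B' T (by omega) (by omega) p q
  have memT : ∀ t ∈ T, t ≠ x1 ∧ t ≠ x2 := by
    intro t ht
    rw [hT, Finset.mem_sdiff] at ht
    have := ht.2
    simp only [Finset.mem_insert, Finset.mem_singleton] at this
    exact ⟨fun h => this (Or.inl h), fun h => this (Or.inr h)⟩
  set F : Fin n → Fin m := fun y => if y = b1 then x1 else if y = b2 then x2 else f y with hF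
  have hFb1 : F b1 = x1 := by rw [hF]; simp
  have hFb2 : F b2 = x2 := by rw [hF]; simp [hb12.symm]
  have hFB : ∀ y ∈ B', F y = f y := by
    intro y hy
    have hy1 : y ≠ b1 := fun h => hb1 (h ▸ hy)
    have hy2 : y ≠ b2 := fun h => hb2 (h ▸ hy)
    rw [hF]
    dsimp only
    rw [if_neg hy1, if_neg hy2]
  set D : Finset (Fin n) := insert b1 (insert b2 B') with hD
  have hb1D : b1 ∉ insert b2 B' := by
    simp only [Finset.mem_insert]
    rintro (h | h); exact hb12 h; exact hb1 h
  have hDcard : D.card = k := by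
    rw [hD, Finset.card_insert_of_notMem hb1D, Finset.card_insert_of_notMem hb2, hB']
    omega
  have hmemD : ∀ y ∈ D, y = b1 ∨ y = b2 ∨ y ∈ B' := by
    intro y hy
    rw [hD, Finset.mem_insert, Finset.mem_insert] at hy
    exact hy
  -- color distinctness of the b2-edge from the B'-part edges
  have hcb2B : ∀ z ∈ B', c (x2, b2) ≠ c (f z, z) := by
    intro z hz heq
    by_cases hpq : (f z, z) = (p, q)
    · have hz1 : z = q := congrArg Prod.snd hpq
      have hz2 : f z = p := congrArg Prod.fst hpq
      exact hf3 (hz1 ▸ hz) (hz1 ▸ hz2) --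
    · exact h4 (f z) z hz hpq heq
  have hcBB : ∀ y ∈ B', ∀ z ∈ B', y ≠ z → c (f y, y) ≠ c (f z, z) := by
    intro y hy z hz hyz heq
    have := hinj (by simp [hy]) (by simp [hz]) heq
    exact hyz (congrArg Prod.snd this)
  -- full injectivity of F on D and color distinctness
  have key : ∀ y ∈ D, ∀ z ∈ D, y ≠ z → F y ≠ F z ∧ c (F y, y) ≠ c (F z, z) := by
    intro y hy z hz hyz
    rcases hmemD y hy with rfl | rfl | hyB <;> rcases hmemD z hz with rfl | rfl | hzB
    · exact absurd rfl hyz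
    · rw [hFb1, hFb2]; exact ⟨hx, h2⟩
    · rw [hFb1, hFB z hzB]
      exact ⟨((memT _ (hf2 z hzB)).1).symm, h3 (f z) z hzB⟩
    · rw [hFb1, hFb2]; exact ⟨hx.symm, h2.symm⟩
    · exact absurd rfl hyz
    · rw [hFb2, hFB z hzB]
      exact ⟨((memT _ (hf2 z hzB)).2).symm, hcb2B z hzB⟩
    · rw [hFb1, hFB y hyB]
      exact ⟨(memT _ (hf2 y hyB)).1, (h3 (f y) y hyB).symm⟩
    · rw [hFb2, hFB y hyB]
      exact ⟨(memT _ (hf2 y hyB)).2, (hcb2B y hyB).symm⟩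
    · rw [hFB y hyB, hFB z hzB]
      exact ⟨fun h => hyz (hf1 (Finset.mem_coe.mpr hyB) (Finset.mem_coe.mpr hzB) h),
        hcBB y hyB z hzB hyz⟩
  refine ⟨D.image (fun y => (F y, y)), ?_, ?_, ?_⟩
  · rw [Finset.card_image_of_injective _ (fun a b h => by simpa using congrArg Prod.snd h)]
    exact hDcard
  · intro e he e' he' hne
    obtain ⟨y, hy, rfl⟩ := Finset.mem_image.mp he
    obtain ⟨z, hz, rfl⟩ := Finset.mem_image.mp he'
    have hyz : y ≠ z := fun h => hne (by rw [h])
    exact ⟨(key y hy z hz hyz).1, hyz⟩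
  · intro u hu v hv heq
    rw [Finset.coe_image, Set.mem_image] at hu hv
    obtain ⟨y, hy, rfl⟩ := hu
    obtain ⟨z, hz, rfl⟩ := hv
    rw [Finset.mem_coe] at hy hz
    by_cases hyz : y = z
    · rw [hyz]
    · exact absurd heq (key y hy z hz hyz).2

/-- Claim 1 (case `m ≥ 4`): if an edge-colored `K_{m,n}` (`m ≥ n ≥ k ≥ 3`, `m ≥ 4`)
contains a rainbow spanning subgraph whose nontrivial component is a complete
bipartite `K_{m,k-2}` (all of the `m`-side joined to a `(k-2)`-set `B'`) together
with two pendant edges `(a₁,b₁)`, `(a₁,b₂)` attached at a common vertex `a₁` of the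
`m`-side, all other vertices isolated, then `K_{m,n}` has a rainbow matching of size `k`. -/
theorem stmt_13 (m n k : ℕ) (hm : 4 ≤ m) (hk : 3 ≤ k) (hkn : k ≤ n) (hnm : n ≤ m)
    (c : Fin m × Fin n → ℕ) (B' : Finset (Fin n)) (hB' : B'.card = k - 2)
    (a1 : Fin m) (b1 b2 : Fin n) (hb1 : b1 ∉ B') (hb2 : b2 ∉ B') (hb12 : b1 ≠ b2)
    (hrb : Set.InjOn c ↑((Finset.univ ×ˢ B') ∪ {(a1, b1), (a1, b2)})) :
    HasRainbowMatching c k := by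
  classical
  have hmemR : ∀ e : Fin m × Fin n, (e.2 ∈ B' ∨ e = (a1, b1) ∨ e = (a1, b2)) →
      e ∈ ((Finset.univ ×ˢ B') ∪ {(a1, b1), (a1, b2)} : Finset (Fin m × Fin n)) := by
    intro e he
    rw [Finset.mem_union, Finset.mem_product]
    rcases he with h | h | h
    · exact Or.inl ⟨Finset.mem_univ _, h⟩
    · right; simp [h]
    · right; simp [h]
  have hinj : Set.InjOn c ((Finset.univ ×ˢ B' : Finset (Fin m × Fin n)) : Set (Fin m × Fin n)) := by
    apply hrb.mono
    intro e he
    rw [Finset.mem_coe] at he ⊢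
    exact Finset.mem_union_left _ he
  have hαβ : c (a1, b1) ≠ c (a1, b2) := by
    intro heq
    have := hrb (Finset.mem_coe.mpr (hmemR _ (Or.inr (Or.inl rfl))))
      (Finset.mem_coe.mpr (hmemR _ (Or.inr (Or.inr rfl)))) heq
    exact hb12 (congrArg Prod.snd this)
  have hαS : ∀ a : Fin m, ∀ b ∈ B', c (a1, b1) ≠ c (a, b) := by
    intro a b hbB heq
    have := hrb (Finset.mem_coe.mpr (hmemR _ (Or.inr (Or.inl rfl))))
      (Finset.mem_coe.mpr (hmemR (a, b) (Or.inl hbB))) heq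
    have hbeq : b1 = b := congrArg Prod.snd this
    exact hb1 (hbeq.symm ▸ hbB)
  have hβS : ∀ a : Fin m, ∀ b ∈ B', c (a1, b2) ≠ c (a, b) := by
    intro a b hbB heq
    have := hrb (Finset.mem_coe.mpr (hmemR _ (Or.inr (Or.inr rfl))))
      (Finset.mem_coe.mpr (hmemR (a, b) (Or.inl hbB))) heq
    have hbeq : b2 = b := congrArg Prod.snd this
    exact hb2 (hbeq.symm ▸ hbB)
  -- Case C: some non-a1 vertex sees on b2 a color from the K_{m,k-2} part.
  by_cases hC : ∃ a : Fin m, a ≠ a1 ∧ ∃ p : Fin m, ∃ qy ∈ B', c (a, b2) = c (p, qy)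
  · obtain ⟨a, ha, p, qy, hqy, hcol⟩ := hC
    have hh2 : c (a1, b1) ≠ c (a, b2) := by rw [hcol]; exact hαS p qy hqy
    have hh4 : ∀ a' : Fin m, ∀ b' ∈ B', (a', b') ≠ (p, qy) → c (a, b2) ≠ c (a', b') := by
      intro a' b' hb' hne heq
      rw [hcol] at heq
      have := hinj (by simp [hqy]) (by simp [hb']) heq
      exact hne this.symm
    exact build_matching hm hk hkn hnm c B' hB' b1 b2 hb1 hb2 hb12 a1 a ha.symm p qy
      hinj hh2 hαS hh4
  -- Case D: some non-a1 vertex sees on b1 a color from the K_{m,k-2} part.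
  by_cases hD : ∃ a : Fin m, a ≠ a1 ∧ ∃ p : Fin m, ∃ qy ∈ B', c (a, b1) = c (p, qy)
  · obtain ⟨a, ha, p, qy, hqy, hcol⟩ := hD
    have hh2 : c (a1, b2) ≠ c (a, b1) := by rw [hcol]; exact hβS p qy hqy
    have hh4 : ∀ a' : Fin m, ∀ b' ∈ B', (a', b') ≠ (p, qy) → c (a, b1) ≠ c (a', b') := by
      intro a' b' hb' hne heq
      rw [hcol] at heq
      have := hinj (by simp [hqy]) (by simp [hb']) heq
      exact hne this.symm
    exact build_matching hm hk hkn hnm c B' hB' b2 b1 hb2 hb1 hb12.symm a1 a ha.symm p qy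
      hinj hh2 hβS hh4
  -- Case A: some non-a1 vertex sees on b2 a color different from c(a1,b1).
  by_cases hA : ∃ a : Fin m, a ≠ a1 ∧ c (a, b2) ≠ c (a1, b1)
  · obtain ⟨a, ha, hcol⟩ := hA
    have hh4 : ∀ a' : Fin m, ∀ b' ∈ B', (a', b') ≠ (a1, b1) → c (a, b2) ≠ c (a', b') := by
      intro a' b' hb' _ heq
      exact hC ⟨a, ha, a', b', hb', heq⟩
    exact build_matching hm hk hkn hnm c B' hB' b1 b2 hb1 hb2 hb12 a1 a ha.symm a1 b1
      hinj (fun h => hcol h.symm) hαS hh4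
  -- Case B: some non-a1 vertex sees on b1 a color different from c(a1,b2).
  by_cases hB : ∃ a : Fin m, a ≠ a1 ∧ c (a, b1) ≠ c (a1, b2)
  · obtain ⟨a, ha, hcol⟩ := hB
    have hh4 : ∀ a' : Fin m, ∀ b' ∈ B', (a', b') ≠ (a1, b2) → c (a, b1) ≠ c (a', b') := by
      intro a' b' hb' _ heq
      exact hD ⟨a, ha, a', b', hb', heq⟩
    exact build_matching hm hk hkn hnm c B' hB' b2 b1 hb2 hb1 hb12.symm a1 a ha.symm a1 b2
      hinj (fun h => hcol h.symm) hβS hh4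
  -- Case E: every vertex other than a1 sees color c(a1,b1) on b2 and c(a1,b2) on b1.
  push_neg at hA hB
  have hcard3 : 2 ≤ (Finset.univ.erase a1 : Finset (Fin m)).card := by
    rw [Finset.card_erase_of_mem (Finset.mem_univ _), Finset.card_univ, Fintype.card_fin]
    omega
  obtain ⟨a2, ha2⟩ := Finset.card_pos.mp (by omega : 0 < (Finset.univ.erase a1 : Finset (Fin m)).card)
  have hcard2 : 0 < ((Finset.univ.erase a1).erase a2 : Finset (Fin m)).card := by
    rw [Finset.card_erase_of_mem ha2]; omega
  obtain ⟨a3, ha3⟩ := Finset.card_pos.mp hcard2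
  have ha2a1 : a2 ≠ a1 := Finset.ne_of_mem_erase ha2
  have ha3a2 : a3 ≠ a2 := Finset.ne_of_mem_erase ha3
  have ha3a1 : a3 ≠ a1 := Finset.ne_of_mem_erase (Finset.mem_of_mem_erase ha3)
  have hv1 : c (a2, b1) = c (a1, b2) := hB a2 ha2a1
  have hv2 : c (a3, b2) = c (a1, b1) := hA a3 ha3a1
  refine build_matching hm hk hkn hnm c B' hB' b1 b2 hb1 hb2 hb12 a2 a3 ha3a2.symm a1 b1
    hinj ?_ ?_ ?_
  · rw [hv1, hv2]; exact hαβ.symm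
  · intro a b hbB; rw [hv1]; exact hβS a b hbB
  · intro a b hbB _; rw [hv2]; exact hαS a b hbB
end

section
/- (Claim 2) Let m ≥ 3 and suppose an edge-colored K_{m,m} contains a rainbow spanning subgraph G consisting of a complete bipartite K_{m-1,m-1} together with a pendant edge pv (with v of degree 1 attached to a vertex p of the K_{m-1,m-1}) and one isolated vertex u. Then K_{m,m} contains a rainbow matching of size m, i.e., a rainbow perfect matching. -/
/-- There is a permutation sending `u` to `v` and avoiding a prescribed pair
`(f1, f2)` with `f1 ≠ u`, provided there are at least 3 elements. -/
lemma exists_perm_avoid {m : ℕ} (hm : 3 ≤ m) (u v f1 f2 : Fin m) (hf1 : f1 ≠ u) :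
    ∃ σ : Equiv.Perm (Fin m), σ u = v ∧ σ f1 ≠ f2 := by
  by_cases h : Equiv.swap u v f1 = f2
  · -- pick z ∉ {u, f1}
    have hz : ∃ z : Fin m, z ∉ ({u, f1} : Finset (Fin m)) := by
      by_contra hz
      push_neg at hz
      have hsub : (Finset.univ : Finset (Fin m)) ⊆ {u, f1} := fun z _ => hz z
      have h1 := Finset.card_le_card hsub
      have h2 : ({u, f1} : Finset (Fin m)).card ≤ 2 :=
        (Finset.card_insert_le _ _).trans (by simp)
      simp [Finset.card_univ] at h1
      omega
    obtain ⟨z, hz⟩ := hz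
    simp only [Finset.mem_insert, Finset.mem_singleton, not_or] at hz
    refine ⟨Equiv.swap u v * Equiv.swap f1 z, ?_, ?_⟩
    · have : Equiv.swap f1 z u = u := Equiv.swap_apply_of_ne_of_ne hf1.symm (Ne.symm hz.1)
      simp [Equiv.Perm.mul_apply, this]
    · have hzf : Equiv.swap f1 z f1 = z := Equiv.swap_apply_left _ _
      simp only [Equiv.Perm.mul_apply, hzf]
      rw [← h]
      exact fun hc => hz.2 ((Equiv.swap u v).injective hc)
  · exact ⟨Equiv.swap u v, Equiv.swap_apply_left u v, h⟩

/-- Claim 2: let `m ≥ 3` and suppose an edge-colored `K_{m,m}` contains a rainbow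
spanning subgraph consisting of a complete bipartite `K_{m-1,m-1}` (all vertices
except `u` on one side and `v` on the other) together with a pendant edge `(p,v)`
(so `v` has degree 1 and `p ≠ u` lies in the `K_{m-1,m-1}`), the vertex `u` being
isolated.  Then `K_{m,m}` contains a rainbow perfect matching (of size `m`). -/
theorem stmt_15 (m : ℕ) (hm : 3 ≤ m) (c : Fin m × Fin m → ℕ)
    (u p : Fin m) (v : Fin m) (hpu : p ≠ u)
    (hrb : Set.InjOn c ↑(((Finset.univ.erase u) ×ˢ (Finset.univ.erase v)) ∪ {(p, v)})) :
    HasRainbowMatching c m := by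
  set S : Finset (Fin m × Fin m) := (Finset.univ.erase u) ×ˢ (Finset.univ.erase v) with hSdef
  have hS : Set.InjOn c ↑S :=
    hrb.mono (Finset.coe_subset.mpr Finset.subset_union_left)
  -- find the (at most one) edge of S with color c (u,v)
  obtain ⟨f1, f2, hf1, key⟩ :
      ∃ f1 f2 : Fin m, f1 ≠ u ∧ ∀ e ∈ S, c e = c (u, v) → e = (f1, f2) := by
    by_cases h : ∃ e ∈ S, c e = c (u, v)
    · obtain ⟨e, he, hce⟩ := h
      have he1 : e.1 ≠ u := by
        have := (Finset.mem_product.mp he).1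
        exact Finset.ne_of_mem_erase this
      refine ⟨e.1, e.2, he1, fun e' he' hce' => ?_⟩
      have : e' = e := hS (by exact_mod_cast he') (by exact_mod_cast he) (hce'.trans hce.symm)
      simp [this]
    · exact ⟨p, v, hpu, fun e he hce => absurd ⟨e, he, hce⟩ h⟩
  obtain ⟨σ, hσu, hσf⟩ := exists_perm_avoid hm u v f1 f2 hf1
  have hmem : ∀ a : Fin m, a ≠ u → (a, σ a) ∈ S := by
    intro a ha
    refine Finset.mem_product.mpr ⟨Finset.mem_erase.mpr ⟨ha, Finset.mem_univ _⟩,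
      Finset.mem_erase.mpr ⟨?_, Finset.mem_univ _⟩⟩
    intro hv
    exact ha (σ.injective (hv.trans hσu.symm))
  have hinj : Function.Injective (fun a : Fin m => (a, σ a)) :=
    fun a b hab => congrArg Prod.fst hab
  refine ⟨Finset.univ.image (fun a => (a, σ a)), ?_, ?_, ?_⟩
  · rw [Finset.card_image_of_injective _ hinj, Finset.card_univ, Fintype.card_fin]
  · intro e he f hf hne
    obtain ⟨a, _, rfl⟩ := Finset.mem_image.mp he
    obtain ⟨b, _, rfl⟩ := Finset.mem_image.mp hf
    have hab : a ≠ b := fun h => hne (by rw [h])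
    exact ⟨hab, fun h => hab (σ.injective h)⟩
  · intro e he f hf hcef
    simp only [Finset.coe_image, Set.mem_image, Finset.mem_coe] at he hf
    obtain ⟨a, _, rfl⟩ := he
    obtain ⟨b, _, rfl⟩ := hf
    by_cases ha : a = u <;> by_cases hb : b = u
    · rw [ha, hb]
    · subst ha
      have : (b, σ b) = (f1, f2) := key _ (hmem b hb) (by rw [← hcef, hσu])
      exact absurd (by rw [← (Prod.mk.injEq _ _ _ _).mp this |>.1]; exact (Prod.mk.injEq _ _ _ _).mp this |>.2) hσf
    · subst hb
      have : (a, σ a) = (f1, f2) := key _ (hmem a ha) (by rw [hcef, hσu])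
      exact absurd (by rw [← (Prod.mk.injEq _ _ _ _).mp this |>.1]; exact (Prod.mk.injEq _ _ _ _).mp this |>.2) hσf
    · exact hS (by exact_mod_cast hmem a ha) (by exact_mod_cast hmem b hb) hcef
end

section
/- Let G be a bipartite graph with parts A (|A| = m) and B (|B| = n), m ≥ n, and suppose the maximum matching of G has size k - i with i ≥ 1. Then |E(G)| ≤ max over 0 ≤ t ≤ k-i of (t + m - k + i)·t + n·(k - i - t), and this maximum is at most m(k-1), with equality possible only when i = 1. -/
open Finset

def IsM {α β : Type*} (M : Finset (α × β)) : Prop :=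
  ∀ e ∈ M, ∀ f ∈ M, e ≠ f → e.1 ≠ f.1 ∧ e.2 ≠ f.2

lemma key {α β : Type*} [DecidableEq α] [DecidableEq β] :
    ∀ d : ℕ, ∀ (A : Finset α) (B : Finset β) (E : Finset (α × β)),
      B.card ≤ A.card → E ⊆ A ×ˢ B →
      (∀ M ⊆ E, IsM M → M.card ≤ d) → E.card ≤ d * A.card := by
  intro d
  induction d with
  | zero =>
    intro A B E hBA hE hmax
    suffices h : E = ∅ by simp [h]
    by_contra h
    obtain ⟨e, he⟩ := Finset.nonempty_iff_ne_empty.2 h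
    have := hmax {e} (by simpa using he) (by intro x hx y hy hxy; simp at hx hy; subst hx; subst hy; exact absurd rfl hxy)
    simp at this
  | succ d ih =>
    intro A B E hBA hE hmax
    classical
    by_cases hEe : E = ∅
    · simp [hEe]
    -- pick a maximum matching M
    obtain ⟨e0, he0⟩ := Finset.nonempty_iff_ne_empty.2 hEe
    obtain ⟨M, hMmem, hMmax⟩ := Finset.exists_max_image
      ((E.powerset.filter (fun M => ∀ e ∈ M, ∀ f ∈ M, e ≠ f → e.1 ≠ f.1 ∧ e.2 ≠ f.2)))
      Finset.card ⟨∅, by simp⟩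
    simp only [Finset.mem_filter, Finset.mem_powerset] at hMmem
    obtain ⟨hME, hMm⟩ := hMmem
    have hMmax' : ∀ M' ⊆ E, IsM M' → M'.card ≤ M.card := by
      intro M' h1 h2
      exact hMmax M' (by simp only [Finset.mem_filter, Finset.mem_powerset]; exact ⟨h1, h2⟩)
    have hMd : M.card ≤ d + 1 := hmax M hME hMm
    have hM1 : 1 ≤ M.card := by
      have := hMmax' {e0} (by simpa using he0)
        (by intro x hx y hy hxy; simp at hx hy; subst hx; subst hy; exact absurd rfl hxy)
      simpa using this
    obtain ⟨⟨a, b⟩, hab⟩ := Finset.card_pos.1 hM1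
    have habE : (a, b) ∈ E := hME hab
    have haA : a ∈ A := (Finset.mem_product.1 (hE habE)).1
    have hbB : b ∈ B := (Finset.mem_product.1 (hE habE)).2
    -- the reduced graph
    set E' : Finset (α × β) := E.filter (fun f => f.1 ≠ a ∧ f.2 ≠ b) with hE'def
    have hE'sub : E' ⊆ (A.erase a) ×ˢ (B.erase b) := by
      intro f hf
      simp only [hE'def, Finset.mem_filter] at hf
      obtain ⟨hfE, h1, h2⟩ := hf
      have := Finset.mem_product.1 (hE hfE)
      exact Finset.mem_product.2 ⟨Finset.mem_erase.2 ⟨h1, this.1⟩, Finset.mem_erase.2 ⟨h2, this.2⟩⟩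
    have hE'max : ∀ M' ⊆ E', IsM M' → M'.card ≤ d := by
      intro M' h1 h2
      have hsub : insert (a, b) M' ⊆ E := by
        intro f hf
        rcases Finset.mem_insert.1 hf with h | h
        · exact h ▸ habE
        · exact (Finset.filter_subset _ _) (h1 h)
      have hnotmem : (a, b) ∉ M' := by
        intro h
        have := h1 h
        simp [hE'def, Finset.mem_filter] at this
      have hm : IsM (insert (a, b) M') := by
        intro e he f hf hef
        rcases Finset.mem_insert.1 he with he' | he' <;>
          rcases Finset.mem_insert.1 hf with hf' | hf'
        · exact absurd (he' ▸ hf' ▸ rfl) hef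
        · have := Finset.mem_filter.1 (h1 hf')
          subst he'
          exact ⟨Ne.symm this.2.1, Ne.symm this.2.2⟩
        · have := Finset.mem_filter.1 (h1 he')
          subst hf'
          exact ⟨this.2.1, this.2.2⟩
        · exact h2 e he' f hf' hef
      have := hmax _ hsub hm
      rw [Finset.card_insert_of_notMem hnotmem] at this
      omega
    have hE'card : E'.card ≤ d * (A.card - 1) := by
      have := ih (A.erase a) (B.erase b) E'
        (by rw [Finset.card_erase_of_mem haA, Finset.card_erase_of_mem hbB]; omega)
        hE'sub hE'max
      rwa [Finset.card_erase_of_mem haA] at this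
    -- the removed edges
    set Da : Finset (α × β) := E.filter (fun f => f.1 = a) with hDadef
    set Db : Finset (α × β) := E.filter (fun f => f.1 ≠ a ∧ f.2 = b) with hDbdef
    have hsplit : E.card = E'.card + Da.card + Db.card := by
      have h1 : E.card = E'.card + (E.filter (fun f => ¬(f.1 ≠ a ∧ f.2 ≠ b))).card :=
        (Finset.card_filter_add_card_filter_not _).symm
      have h2 : E.filter (fun f => ¬(f.1 ≠ a ∧ f.2 ≠ b)) = Da ∪ Db := by
        ext f
        simp only [Finset.mem_filter, Finset.mem_union, hDadef, hDbdef]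
        tauto
      have h3 : Disjoint Da Db := by
        rw [Finset.disjoint_left]
        intro f hf1 hf2
        simp only [hDadef, hDbdef, Finset.mem_filter] at hf1 hf2
        exact hf2.2.1 hf1.2
      rw [h1, h2, Finset.card_union_of_disjoint h3]
      ring
    -- degree bounds
    have hDaInj : Set.InjOn Prod.snd (Da : Set (α × β)) := by
      intro x hx y hy hxy
      simp only [Finset.coe_filter, Set.mem_setOf_eq, hDadef] at hx hy
      exact Prod.ext (hx.2.trans hy.2.symm) hxy
    have hDbInj : Set.InjOn Prod.fst (Db : Set (α × β)) := by
      intro x hx y hy hxy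
      simp only [Finset.coe_filter, Set.mem_setOf_eq, hDbdef] at hx hy
      exact Prod.ext hxy (hx.2.2.trans hy.2.2.symm)
    have hDaB : Da.card ≤ B.card := by
      rw [← Finset.card_image_of_injOn hDaInj]
      apply Finset.card_le_card
      intro y hy
      obtain ⟨f, hf, rfl⟩ := Finset.mem_image.1 hy
      exact (Finset.mem_product.1 (hE (Finset.mem_filter.1 hf).1)).2
    have hDbA : Db.card ≤ A.card - 1 := by
      rw [← Finset.card_image_of_injOn hDbInj]
      have : Db.image Prod.fst ⊆ A.erase a := by
        intro x hx
        obtain ⟨f, hf, rfl⟩ := Finset.mem_image.1 hx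
        have hf' := Finset.mem_filter.1 hf
        exact Finset.mem_erase.2 ⟨hf'.2.1, (Finset.mem_product.1 (hE hf'.1)).1⟩
      calc (Db.image Prod.fst).card ≤ (A.erase a).card := Finset.card_le_card this
        _ = A.card - 1 := Finset.card_erase_of_mem haA
    -- case split via augmenting path
    have hcase : (∀ f ∈ E, f.1 = a → f.2 ∈ M.image Prod.snd) ∨
        (∀ f ∈ E, f.2 = b → f.1 ∈ M.image Prod.fst) := by
      by_contra h
      push_neg at h
      obtain ⟨⟨⟨x1, b'⟩, hf1, hf1a, hb'⟩, ⟨⟨a', x2⟩, hf2, hf2b, ha'⟩⟩ := h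
      simp only at hf1a hf2b hb' ha'
      rw [hf1a] at hf1
      rw [hf2b] at hf2
      clear hf1a hf2b
      have hb'b : b' ≠ b := by
        intro h; subst h
        exact hb' (Finset.mem_image.2 ⟨(a, b'), hab, rfl⟩)
      have ha'a : a' ≠ a := by
        intro h; subst h
        exact ha' (Finset.mem_image.2 ⟨(a', b), hab, rfl⟩)
      set M'' : Finset (α × β) := insert (a, b') (insert (a', b) (M.erase (a, b))) with hM''def
      -- membership facts
      have huniq1 : ∀ f ∈ M, f.1 = a → f = (a, b) := by
        intro f hf hfa
        by_contra hne
        exact (hMm f hf (a, b) hab hne).1 hfa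
      have huniq2 : ∀ f ∈ M, f.2 = b → f = (a, b) := by
        intro f hf hfb
        by_contra hne
        exact (hMm f hf (a, b) hab hne).2 hfb
      have h1 : (a', b) ∉ M.erase (a, b) := by
        intro h
        have hm := Finset.mem_of_mem_erase h
        have := huniq2 _ hm rfl
        simp at this
        exact ha'a this
      have h2 : (a, b') ∉ insert (a', b) (M.erase (a, b)) := by
        intro h
        rcases Finset.mem_insert.1 h with h | h
        · exact ha'a (congrArg Prod.fst h).symm
        · exact hb' (Finset.mem_image.2 ⟨(a, b'), Finset.mem_of_mem_erase h, rfl⟩)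
      have hM''sub : M'' ⊆ E := by
        intro f hf
        simp only [hM''def, Finset.mem_insert] at hf
        rcases hf with rfl | rfl | hf
        · exact hf1
        · exact hf2
        · exact hME (Finset.mem_of_mem_erase hf)
      have hM''m : IsM M'' := by
        intro e he f hf hef
        simp only [hM''def, Finset.mem_insert] at he hf
        have key1 : ∀ g ∈ M.erase (a, b), (a, b').1 ≠ g.1 ∧ (a, b').2 ≠ g.2 := by
          intro g hg
          constructor
          · intro h
            have := huniq1 g (Finset.mem_of_mem_erase hg) h.symm
            exact (Finset.mem_erase.1 hg).1 this
          · intro h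
            exact hb' (Finset.mem_image.2 ⟨g, Finset.mem_of_mem_erase hg, h.symm⟩)
        have key2 : ∀ g ∈ M.erase (a, b), (a', b).1 ≠ g.1 ∧ (a', b).2 ≠ g.2 := by
          intro g hg
          constructor
          · intro h
            exact ha' (Finset.mem_image.2 ⟨g, Finset.mem_of_mem_erase hg, h.symm⟩)
          · intro h
            have := huniq2 g (Finset.mem_of_mem_erase hg) h.symm
            exact (Finset.mem_erase.1 hg).1 this
        rcases he with rfl | rfl | he <;> rcases hf with rfl | rfl | hf
        · exact absurd rfl hef
        · exact ⟨ha'a.symm, hb'b⟩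
        · exact key1 f hf
        · exact ⟨ha'a, hb'b.symm⟩
        · exact absurd rfl hef
        · exact key2 f hf
        · exact ⟨(key1 e he).1.symm, (key1 e he).2.symm⟩
        · exact ⟨(key2 e he).1.symm, (key2 e he).2.symm⟩
        · exact hMm e (Finset.mem_of_mem_erase he) f (Finset.mem_of_mem_erase hf) hef
      have hcard : M''.card = M.card + 1 := by
        rw [hM''def, Finset.card_insert_of_notMem h2, Finset.card_insert_of_notMem h1,
          Finset.card_erase_of_mem hab]
        omega
      have := hMmax' M'' hM''sub hM''m
      omega
    -- conclude
    have hA1 : 1 ≤ A.card := Finset.card_pos.2 ⟨a, haA⟩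
    have hfin : Da.card + Db.card ≤ A.card + d := by
      rcases hcase with hc | hc
      · -- deg a ≤ M.card
        have hDaM : Da.card ≤ M.card := by
          rw [← Finset.card_image_of_injOn hDaInj]
          have : Da.image Prod.snd ⊆ M.image Prod.snd := by
            intro y hy
            obtain ⟨f, hf, rfl⟩ := Finset.mem_image.1 hy
            have hf' := Finset.mem_filter.1 hf
            exact hc f hf'.1 hf'.2
          exact (Finset.card_le_card this).trans Finset.card_image_le
        omega
      · have hDbM : Db.card ≤ M.card - 1 := by
          rw [← Finset.card_image_of_injOn hDbInj]
          have : Db.image Prod.fst ⊆ (M.image Prod.fst).erase a := by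
            intro x hx
            obtain ⟨f, hf, rfl⟩ := Finset.mem_image.1 hx
            have hf' := Finset.mem_filter.1 hf
            exact Finset.mem_erase.2 ⟨hf'.2.1, hc f hf'.1 hf'.2.2⟩
          have haM : a ∈ M.image Prod.fst := Finset.mem_image.2 ⟨(a, b), hab, rfl⟩
          calc (Db.image Prod.fst).card ≤ ((M.image Prod.fst).erase a).card :=
                Finset.card_le_card this
            _ = (M.image Prod.fst).card - 1 := Finset.card_erase_of_mem haM
            _ ≤ M.card - 1 := by have := Finset.card_image_le (s := M) (f := Prod.fst); omega
        have : Da.card ≤ A.card := hDaB.trans hBA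
        omega
    calc E.card = E'.card + Da.card + Db.card := hsplit
      _ ≤ d * (A.card - 1) + (A.card + d) := by omega
      _ ≤ (d + 1) * A.card := by
          obtain ⟨c, hc⟩ : ∃ c, A.card = c + 1 := ⟨A.card - 1, by omega⟩
          rw [hc]
          have h1 : (d + 1) * (c + 1) = d * c + d + c + 1 := by ring
          simp only [Nat.add_sub_cancel]
          omega

/-- Defect counting: if `G` is bipartite with parts of sizes `m ≥ n ≥ 1` and its
maximum matching has size `k - i` with `i ≥ 1`, then
`|E(G)| ≤ max_{0 ≤ t ≤ k-i} (t + m - k + i)·t + n·(k - i - t)`, this maximum is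
at most `m(k-1)`, and equality `|E(G)| = m(k-1)` is possible only when `i = 1`. -/
theorem stmt_17 (m n k i : ℕ) (hn : 1 ≤ n) (hnm : n ≤ m) (hi : 1 ≤ i) (hik : i ≤ k)
    (E : Finset (Fin m × Fin n))
    (hmatch : HasMatching E (k - i))
    (hmax : ∀ j, HasMatching E j → j ≤ k - i) :
    E.card ≤ (Finset.range (k - i + 1)).sup
        (fun t => (t + (m - (k - i))) * t + n * (k - i - t)) ∧
    (Finset.range (k - i + 1)).sup
        (fun t => (t + (m - (k - i))) * t + n * (k - i - t)) ≤ m * (k - 1) ∧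
    (E.card = m * (k - 1) → i = 1) := by
  set d := k - i with hd
  -- d ≤ n
  obtain ⟨M0, hM0E, hM0card, hM0m⟩ := hmatch
  have hdn : d ≤ n := by
    have hinj : Set.InjOn Prod.snd (M0 : Set (Fin m × Fin n)) := by
      intro x hx y hy hxy
      by_contra hne
      exact (hM0m x hx y hy hne).2 hxy
    calc d = M0.card := hM0card.symm
      _ = (M0.image Prod.snd).card := (Finset.card_image_of_injOn hinj).symm
      _ ≤ (Finset.univ : Finset (Fin n)).card := Finset.card_le_card (Finset.subset_univ _)
      _ = n := by simp
  have hdm : d ≤ m := hdn.trans hnm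
  -- the König-type bound
  have hEbound : E.card ≤ d * m := by
    have := key d (Finset.univ : Finset (Fin m)) (Finset.univ : Finset (Fin n)) E
      (by simp [hnm]) (by intro x _; simp)
      (fun M hME hMm => hmax M.card ⟨M, hME, rfl, hMm⟩)
    simpa using this
  -- each term of the sup is at most m * d
  have hterm : ∀ t ∈ Finset.range (d + 1),
      (t + (m - d)) * t + n * (d - t) ≤ m * d := by
    intro t ht
    have htd : t ≤ d := by simpa [Nat.lt_succ_iff] using ht
    have h1 : t + (m - d) ≤ m := by omega
    calc (t + (m - d)) * t + n * (d - t) ≤ m * t + m * (d - t) :=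
          Nat.add_le_add (Nat.mul_le_mul_right t h1) (Nat.mul_le_mul_right _ hnm)
      _ = m * d := by rw [← Nat.mul_add]; congr 1; omega
  -- the sup is at least m * d (t = d term)
  have hsupge : m * d ≤ (Finset.range (d + 1)).sup
      (fun t => (t + (m - d)) * t + n * (d - t)) := by
    have hmem : d ∈ Finset.range (d + 1) := Finset.mem_range.2 (Nat.lt_succ_self d)
    have := Finset.le_sup (f := fun t => (t + (m - d)) * t + n * (d - t)) hmem
    calc m * d = (d + (m - d)) * d + n * (d - d) := by
          rw [Nat.sub_self, Nat.mul_zero, Nat.add_zero]; congr 1; omega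
      _ ≤ _ := this
  have hsuple : (Finset.range (d + 1)).sup
      (fun t => (t + (m - d)) * t + n * (d - t)) ≤ m * d := Finset.sup_le hterm
  have hdk1 : d ≤ k - 1 := by omega
  have hmd_le : m * d ≤ m * (k - 1) := Nat.mul_le_mul_left m hdk1
  refine ⟨hEbound.trans (by rw [Nat.mul_comm d m]; exact hsupge),
    hsuple.trans hmd_le, ?_⟩
  intro hEeq
  have h1 : m * (k - 1) ≤ m * d := by
    rw [← hEeq]
    calc E.card ≤ d * m := hEbound
      _ = m * d := Nat.mul_comm d m
  have h2 : k - 1 ≤ d := Nat.le_of_mul_le_mul_left h1 (by omega)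
  omega
end

section
/- For m ≥ n ≥ k ≥ 3, the edge-coloring of K_{m,n} that assigns m(k-2) distinct colors to the edges of a fixed K_{m,k-2} subgraph and one additional common color to all remaining edges uses m(k-2)+1 colors and contains no rainbow matching of size k. -/
/-- For `m ≥ n ≥ k ≥ 3`: the edge-coloring of `K_{m,n}` assigning `m(k-2)` distinct
colors to the edges into a fixed `(k-2)`-subset `B'` of the `n`-side and one further
common color to all remaining edges uses `m(k-2)+1` colors and contains no rainbow
matching of size `k`. -/
theorem stmt_19 (m n k : ℕ) (hk : 3 ≤ k) (hkn : k ≤ n) (hnm : n ≤ m)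
    (B' : Finset (Fin n)) (hB' : B'.card = k - 2)
    (c : Fin m × Fin n → ℕ)
    (hinj : Set.InjOn c {e : Fin m × Fin n | e.2 ∈ B'})
    (hconst : ∀ e f : Fin m × Fin n, e.2 ∉ B' → f.2 ∉ B' → c e = c f)
    (hdiff : ∀ e f : Fin m × Fin n, e.2 ∈ B' → f.2 ∉ B' → c e ≠ c f) :
    ((Finset.univ : Finset (Fin m × Fin n)).image c).card = m * (k - 2) + 1 ∧
    ¬ HasRainbowMatching c k := by
  have hm : 0 < m := by omega
  obtain ⟨b0, hb0⟩ : ∃ b : Fin n, b ∉ B' := by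
    by_contra h
    push_neg at h
    have hsub : (Finset.univ : Finset (Fin n)) ⊆ B' := fun b _ => h b
    have := Finset.card_le_card hsub
    simp [Finset.card_univ, hB'] at this
    omega
  set a0 : Fin m := ⟨0, hm⟩ with ha0
  constructor
  · have key : (Finset.univ : Finset (Fin m × Fin n)).image c
        = ((Finset.univ ×ˢ B').image c) ∪ {c (a0, b0)} := by
      ext x
      simp only [Finset.mem_image, Finset.mem_union, Finset.mem_singleton,
        Finset.mem_product, Finset.mem_univ, true_and]
      constructor
      · rintro ⟨e, -, rfl⟩
        by_cases he : e.2 ∈ B'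
        · exact Or.inl ⟨e, he, rfl⟩
        · exact Or.inr (hconst e (a0, b0) he hb0)
      · rintro (⟨e, he, rfl⟩ | rfl)
        · exact ⟨e, rfl⟩
        · exact ⟨(a0, b0), rfl⟩
    rw [key, Finset.card_union_of_disjoint, Finset.card_image_of_injOn,
      Finset.card_product, Finset.card_univ, Fintype.card_fin, hB', Finset.card_singleton]
    · intro e he f hf hef
      rw [Finset.mem_coe, Finset.mem_product] at he hf
      exact hinj he.2 hf.2 hef
    · rw [Finset.disjoint_singleton_right, Finset.mem_image]
      rintro ⟨e, he, heq⟩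
      rw [Finset.mem_product] at he
      exact hdiff e (a0, b0) he.2 hb0 heq
  · rintro ⟨M, hcard, hmatch, hinjM⟩
    set M1 := M.filter (fun e => e.2 ∈ B') with hM1
    set M2 := M.filter (fun e => e.2 ∉ B') with hM2
    have h1 : M1.card ≤ k - 2 := by
      have hsndinj : Set.InjOn (Prod.snd : Fin m × Fin n → Fin n) (↑M1 : Set (Fin m × Fin n)) := by
        intro e he f hf hef
        by_contra hne
        exact (hmatch e (Finset.mem_of_mem_filter e he) f
          (Finset.mem_of_mem_filter f hf) hne).2 hef
      have hsub : M1.image Prod.snd ⊆ B' := by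
        intro b hb
        rw [Finset.mem_image] at hb
        obtain ⟨e, he, rfl⟩ := hb
        exact (Finset.mem_filter.mp he).2
      calc M1.card = (M1.image Prod.snd).card := (Finset.card_image_of_injOn hsndinj).symm
        _ ≤ B'.card := Finset.card_le_card hsub
        _ = k - 2 := hB'
    have h2 : M2.card ≤ 1 := by
      apply Finset.card_le_one.mpr
      intro e he f hf
      have hceq : c e = c f :=
        hconst e f (Finset.mem_filter.mp he).2 (Finset.mem_filter.mp hf).2
      exact hinjM (Finset.mem_coe.mpr (Finset.mem_of_mem_filter e he))
        (Finset.mem_coe.mpr (Finset.mem_of_mem_filter f hf)) hceq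
    have hsum : M1.card + M2.card = M.card :=
      Finset.card_filter_add_card_filter_not (fun e : Fin m × Fin n => e.2 ∈ B')
    omega
end
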